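/- arXiv:1810.10632 — 10 statements merged into one kernel-verified Lean document; each statement's English description precedes it below -/
import Mathlib

section
/- For any round, i.e., any range of steps s0 ≤ i < s1, and any processor p, assuming (Partition), (Interval) and (NoDoubleMigration), the attached set at the end of the round is disjoint from the round-level set of nodes migrated from p: R s1 p ∩ (⋃_{s0 ≤ i < s1} M⁺ i p) = ∅. -/
/-! A node `μ` that leaves `p` at step `i` but is attached to `p` again at `s1` must have
re-entered `p` at some step `j` with `i < j < s1`. Since `μ` is ready throughout `[i + 1, s1]`,
it was then attached to some other processor `q`, so it migrated out of `q` at step `j`: a second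
migration of `μ` within the round. -/

open Set

variable {P V : Type*}

/-- `Rtot R i` is the set of ready nodes at step `i`. -/
def Rtot (R : ℕ → P → Set V) (i : ℕ) : Set V := ⋃ p, R i p

/-- Nodes enabled by `p` at step `i`. -/
def En (R : ℕ → P → Set V) (i : ℕ) (p : P) : Set V := R (i + 1) p \ Rtot R i

/-- Nodes executed (computed) by `p` at step `i`. -/
def Ex (R : ℕ → P → Set V) (i : ℕ) (p : P) : Set V := R i p \ Rtot R (i + 1)

/-- Nodes migrated from `p` at step `i`. -/
def Mout (R : ℕ → P → Set V) (i : ℕ) (p : P) : Set V :=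
  R i p ∩ (Rtot R (i + 1) \ R (i + 1) p)

/-- Nodes migrated to `p` at step `i`. -/
def Mi (R : ℕ → P → Set V) (i : ℕ) (p : P) : Set V :=
  R (i + 1) p ∩ (Rtot R i \ R i p)

theorem Nat.exists_mem_Ico_not_and_succ {p : ℕ → Prop} {a b : ℕ} (hab : a ≤ b) (ha : ¬ p a)
    (hb : p b) : ∃ j ∈ Ico a b, ¬ p j ∧ p (j + 1) := by
  induction b, hab using Nat.le_induction with
  | base => exact absurd hb ha
  | succ b hab ih =>
    by_cases hpb : p b
    · obtain ⟨j, hj, hj'⟩ := ih hpb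
      exact ⟨j, ⟨hj.1, hj.2.trans b.lt_succ_self⟩, hj'⟩
    · exact ⟨b, ⟨hab, b.lt_succ_self⟩, hpb, hb⟩

open Function in
theorem exists_mem_Mout_of_mem_Mi {R : ℕ → P → Set V} {j : ℕ} {p : P} {μ : V}
    (hPart : Pairwise (Disjoint on (R (j + 1)))) (hμ : μ ∈ Mi R j p) :
    ∃ q, μ ∈ Mout R j q := by
  obtain ⟨hμp, hμj, hμpj⟩ := hμ
  obtain ⟨q, hμq⟩ := mem_iUnion.1 hμj
  have hqp : q ≠ p := by rintro rfl; exact hμpj hμq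
  exact ⟨q, hμq, mem_iUnion.2 ⟨p, hμp⟩, fun h ↦ (hPart hqp).ne_of_mem h hμp rfl⟩

theorem end_of_round_disjoint_from_migrated_out (R : ℕ → P → Set V) (s0 s1 : ℕ)
    (hPart : ∀ i : ℕ, ∀ p q : P, p ≠ q → Disjoint (R i p) (R i q))
    (hInterval : ∀ (μ : V) (i j k : ℕ), i ≤ j → j ≤ k →
      μ ∈ Rtot R i → μ ∈ Rtot R k → μ ∈ Rtot R j)
    (hNoDouble : ∀ i ∈ Set.Ico s0 s1, ∀ j ∈ Set.Ico s0 s1, ∀ (q r : P) (μ : V),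
      μ ∈ Mout R i q → μ ∈ Mout R j r → i = j ∧ q = r)
    (p : P) :
    R s1 p ∩ (⋃ i ∈ Set.Ico s0 s1, Mout R i p) = ∅ := by
  refine eq_empty_of_forall_notMem fun μ ⟨hμs1, hμout⟩ ↦ ?_
  obtain ⟨i, hi, hμi⟩ := mem_iUnion₂.1 hμout
  obtain ⟨j, hj, hμj, hμj'⟩ :=
    Nat.exists_mem_Ico_not_and_succ (p := (μ ∈ R · p)) hi.2 hμi.2.2 hμs1
  have hμtot : μ ∈ Rtot R j :=
    hInterval μ (i + 1) j s1 hj.1 hj.2.le hμi.2.1 (mem_iUnion.2 ⟨p, hμs1⟩)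
  obtain ⟨q, hμq⟩ := exists_mem_Mout_of_mem_Mi (hPart (j + 1)) ⟨hμj', hμtot, hμj⟩
  obtain rfl := (hNoDouble i hi j ⟨hi.1.trans (i.le_succ.trans hj.1), hj.2⟩ p q μ hμi hμq).1
  exact i.not_succ_le_self hj.1
end

section
/- For any steps s0 < s1 and any processor p, with no further hypotheses, R s1 p ⊇ (⋃_{s0 ≤ i < s1} M⁻ i p) \ (⋃_{s0 ≤ i < s1} (C i p ∪ M⁺ i p)). -/
open Set

variable {P V : Type*}

theorem diff_Ex_union_Mout_subset (R : ℕ → P → Set V) (i : ℕ) (p : P) :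
    R i p \ (Ex R i p ∪ Mout R i p) ⊆ R (i + 1) p := by
  rintro v ⟨hv, hnot⟩
  have hready : v ∈ Rtot R (i + 1) := by_contra fun h => hnot (Or.inl ⟨hv, h⟩)
  exact by_contra fun h => hnot (Or.inr ⟨hv, hready, h⟩)

theorem mem_of_forall_notMem_Ex_union_Mout {R : ℕ → P → Set V} {p : P} {v : V} {j n : ℕ}
    (hjn : j ≤ n) (hv : v ∈ R j p) (hstay : ∀ k ∈ Ico j n, v ∉ Ex R k p ∪ Mout R k p) :
    v ∈ R n p := by
  induction n, hjn using Nat.le_induction with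
  | base => exact hv
  | succ n hjn ih =>
    have hv_n : v ∈ R n p := ih fun k hk => hstay k ⟨hk.1, hk.2.trans n.lt_succ_self⟩
    exact diff_Ex_union_Mout_subset R n p ⟨hv_n, hstay n ⟨hjn, n.lt_succ_self⟩⟩

theorem migrated_in_minus_executed_migrated_out_subset_general (R : ℕ → P → Set V)
    (s0 s1 : ℕ) (p : P) :
    (⋃ i ∈ Set.Ico s0 s1, Mi R i p) \ (⋃ i ∈ Set.Ico s0 s1, (Ex R i p ∪ Mout R i p)) ⊆
      R s1 p := by
  rintro v ⟨hin, hout⟩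
  obtain ⟨i, hi, hv⟩ := mem_iUnion₂.1 hin
  refine mem_of_forall_notMem_Ex_union_Mout hi.2 hv.1 fun k hk hk' => hout ?_
  exact mem_iUnion₂.2 ⟨k, ⟨hi.1.trans (Nat.le_succ i |>.trans hk.1), hk.2⟩, hk'⟩

theorem migrated_in_minus_executed_migrated_out_subset (R : ℕ → P → Set V)
    (s0 s1 : ℕ) (h : s0 < s1) (p : P) :
    (⋃ i ∈ Set.Ico s0 s1, Mi R i p) \ (⋃ i ∈ Set.Ico s0 s1, (Ex R i p ∪ Mout R i p)) ⊆
      R s1 p :=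
  migrated_in_minus_executed_migrated_out_subset_general R s0 s1 p
end

section
/- For any steps s0 < s1 and any processor p, with no further hypotheses, R s1 p ∪ (⋃_{s0 ≤ i < s1} C i p) ⊇ ⋂_{s0 ≤ i < s1} [ R s0 p ∩ ((R i p)ᶜ ∪ (Rtot (i+1))ᶜ ∪ R (i+1) p) ], where complements are taken in the node type V. -/
open Set

variable {P V : Type*}

/-! Follow a node forward from step `s0`: each step either keeps it attached to `p` or, since it
is then ready nowhere, it has just been executed by `p`. -/

theorem mem_union_biUnion_Ico_of_step {α : Type*} (A B : ℕ → Set α) {x : α} {m n : ℕ}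
    (hmn : m ≤ n) (hm : x ∈ A m)
    (hstep : ∀ i ∈ Ico m n, x ∈ A i → x ∈ B i ∨ x ∈ A (i + 1)) :
    x ∈ A n ∪ ⋃ i ∈ Ico m n, B i := by
  induction n, hmn using Nat.le_induction with
  | base => exact Or.inl hm
  | succ n hmn ih =>
    have hIco : Ico m n ⊆ Ico m (n + 1) := Ico_subset_Ico_right n.le_succ
    have hn : n ∈ Ico m (n + 1) := ⟨hmn, n.lt_succ_self⟩
    rcases ih fun i hi => hstep i (hIco hi) with hA | hB
    · rcases hstep n hn hA with hBn | hA'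
      · exact Or.inr (mem_biUnion hn hBn)
      · exact Or.inl hA'
    · exact Or.inr (biUnion_mono hIco (fun _ _ => subset_rfl) hB)

theorem mem_Ex_or_mem_succ {R : ℕ → P → Set V} {i : ℕ} {p : P} {x : V} (hx : x ∈ R i p)
    (h : x ∈ (R i p)ᶜ ∪ (Rtot R (i + 1))ᶜ ∪ R (i + 1) p) :
    x ∈ Ex R i p ∨ x ∈ R (i + 1) p := by
  rcases h with (h | h) | h
  · exact absurd hx h
  · exact Or.inl ⟨hx, h⟩
  · exact Or.inr h

theorem inter_bound_by_end_and_executed (R : ℕ → P → Set V)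
    (s0 s1 : ℕ) (h : s0 < s1) (p : P) :
    (⋂ i ∈ Set.Ico s0 s1, (R s0 p ∩ ((R i p)ᶜ ∪ (Rtot R (i + 1))ᶜ ∪ R (i + 1) p))) ⊆
      R s1 p ∪ ⋃ i ∈ Set.Ico s0 s1, Ex R i p := by
  intro x hx
  rw [mem_iInter₂] at hx
  refine mem_union_biUnion_Ico_of_step (fun i => R i p) (fun i => Ex R i p) h.le
    (hx s0 ⟨le_rfl, h⟩).1 fun i hi hxi => ?_
  exact mem_Ex_or_mem_succ hxi (hx i hi).2
end

section
/- For any steps s0 < s1 and any processor p, with no further hypotheses, R s1 p ∪ (⋃_{s0 ≤ i < s1} C i p) ⊇ (⋃_{s0 ≤ i < s1} E i p) \ (⋃_{s0 ≤ i < s1} M⁺ i p). -/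
open Set

variable {P V : Type*}

section Fate

variable {R : ℕ → P → Set V} {p : P} {v : V}

theorem mem_succ_or_mem_Ex_or_mem_Mout {i : ℕ} (hv : v ∈ R i p) :
    v ∈ R (i + 1) p ∨ v ∈ Ex R i p ∨ v ∈ Mout R i p := by
  by_cases hnext : v ∈ R (i + 1) p
  · exact .inl hnext
  by_cases hready : v ∈ Rtot R (i + 1)
  · exact .inr (.inr ⟨hv, hready, hnext⟩)
  · exact .inr (.inl ⟨hv, hready⟩)

theorem mem_or_mem_Ex_of_not_mem_Mout {k n : ℕ} (hkn : k ≤ n) (hv : v ∈ R k p)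
    (hstay : ∀ j ∈ Ico k n, v ∉ Mout R j p) :
    v ∈ R n p ∨ ∃ j ∈ Ico k n, v ∈ Ex R j p := by
  induction n, hkn using Nat.le_induction with
  | base => exact .inl hv
  | succ n hkn ih =>
    have hIco : Ico k n ⊆ Ico k (n + 1) := Ico_subset_Ico_right n.le_succ
    rcases ih fun j hj => hstay j (hIco hj) with hvn | ⟨j, hj, hex⟩
    · rcases mem_succ_or_mem_Ex_or_mem_Mout hvn with hnext | hex | hout
      · exact .inl hnext
      · exact .inr ⟨n, ⟨hkn, n.lt_succ_self⟩, hex⟩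
      · exact absurd hout (hstay n ⟨hkn, n.lt_succ_self⟩)
    · exact .inr ⟨j, hIco hj, hex⟩

end Fate

theorem enabled_minus_migrated_out_subset_general (R : ℕ → P → Set V)
    (s0 s1 : ℕ) (p : P) :
    (⋃ i ∈ Set.Ico s0 s1, En R i p) \ (⋃ i ∈ Set.Ico s0 s1, Mout R i p) ⊆
      R s1 p ∪ ⋃ i ∈ Set.Ico s0 s1, Ex R i p := by
  rintro v ⟨hen, hstay⟩
  simp only [mem_iUnion, exists_prop, not_exists, not_and] at hen hstay
  obtain ⟨i, ⟨hs0i, his1⟩, hv, -⟩ := hen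
  have hIco : Ico (i + 1) s1 ⊆ Ico s0 s1 := Ico_subset_Ico_left (by omega)
  rcases mem_or_mem_Ex_of_not_mem_Mout his1 hv fun j hj => hstay j (hIco hj)
    with hvs1 | ⟨j, hj, hex⟩
  · exact .inl hvs1
  · exact .inr (mem_biUnion (hIco hj) hex)

theorem enabled_minus_migrated_out_subset (R : ℕ → P → Set V)
    (s0 s1 : ℕ) (h : s0 < s1) (p : P) :
    (⋃ i ∈ Set.Ico s0 s1, En R i p) \ (⋃ i ∈ Set.Ico s0 s1, Mout R i p) ⊆
      R s1 p ∪ ⋃ i ∈ Set.Ico s0 s1, Ex R i p :=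
  enabled_minus_migrated_out_subset_general R s0 s1 p
end

section
/- For any round, i.e., any range of steps s0 ≤ i < s1, and any processor p, assuming (Partition), (Interval) and (NoDoubleMigration), the round-level executed set is disjoint from the round-level set of nodes migrated from p: (⋃_{s0 ≤ i < s1} C i p) ∩ (⋃_{s0 ≤ i < s1} M⁺ i p) = ∅. -/
open Set

variable {P V : Type*}

/-! A node executed at step `i` is no longer ready after `i`, so it cannot migrate at any
step `j ≥ i`. A node migrated from `p` at step `j < i` sits on another processor at step
`j + 1` and back on `p` at step `i`; staying ready in between, it must change processor
once more, i.e. migrate a second time within the round. -/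

lemma mem_Rtot_of_mem {R : ℕ → P → Set V} {i : ℕ} {q : P} {μ : V} (h : μ ∈ R i q) :
    μ ∈ Rtot R i :=
  mem_iUnion_of_mem q h

lemma not_mem_Mout_of_mem_Ex {R : ℕ → P → Set V}
    (hInterval : ∀ (μ : V) (i j k : ℕ), i ≤ j → j ≤ k →
      μ ∈ Rtot R i → μ ∈ Rtot R k → μ ∈ Rtot R j)
    {i j : ℕ} (hij : i ≤ j) {p q : P} {μ : V} (hEx : μ ∈ Ex R i p) : μ ∉ Mout R j q :=
  fun hMout => hEx.2 <|
    hInterval μ i (i + 1) (j + 1) i.le_succ (by omega) (mem_Rtot_of_mem hEx.1) hMout.2.1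

lemma exists_mem_Mout_of_mem_of_mem {R : ℕ → P → Set V}
    (hPart : ∀ i : ℕ, ∀ p q : P, p ≠ q → Disjoint (R i p) (R i q))
    (hInterval : ∀ (μ : V) (i j k : ℕ), i ≤ j → j ≤ k →
      μ ∈ Rtot R i → μ ∈ Rtot R k → μ ∈ Rtot R j)
    {a b : ℕ} (hab : a ≤ b) {p q : P} (hqp : q ≠ p) {μ : V}
    (ha : μ ∈ R a q) (hb : μ ∈ R b p) : ∃ k ∈ Ico a b, ∃ r, μ ∈ Mout R k r := by
  induction b, hab using Nat.le_induction with
  | base => exact (disjoint_left.1 (hPart a q p hqp) ha hb).elim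
  | succ b hab ih =>
    obtain ⟨r, hr⟩ := mem_iUnion.1 <|
      hInterval μ a b (b + 1) hab b.le_succ (mem_Rtot_of_mem ha) (mem_Rtot_of_mem hb)
    by_cases hrp : r = p
    · subst hrp
      obtain ⟨k, hk, hMout⟩ := ih hr
      exact ⟨k, ⟨hk.1, hk.2.trans b.lt_succ_self⟩, hMout⟩
    · exact ⟨b, ⟨hab, b.lt_succ_self⟩, r, hr, mem_Rtot_of_mem hb,
        disjoint_right.1 (hPart (b + 1) r p hrp) hb⟩

theorem executed_disjoint_from_migrated_out (R : ℕ → P → Set V) (s0 s1 : ℕ)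
    (hPart : ∀ i : ℕ, ∀ p q : P, p ≠ q → Disjoint (R i p) (R i q))
    (hInterval : ∀ (μ : V) (i j k : ℕ), i ≤ j → j ≤ k →
      μ ∈ Rtot R i → μ ∈ Rtot R k → μ ∈ Rtot R j)
    (hNoDouble : ∀ i ∈ Set.Ico s0 s1, ∀ j ∈ Set.Ico s0 s1, ∀ (q r : P) (μ : V),
      μ ∈ Mout R i q → μ ∈ Mout R j r → i = j ∧ q = r)
    (p : P) :
    (⋃ i ∈ Set.Ico s0 s1, Ex R i p) ∩ (⋃ i ∈ Set.Ico s0 s1, Mout R i p) = ∅ := by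
  refine eq_empty_of_forall_notMem fun μ ⟨hEx, hMout⟩ => ?_
  obtain ⟨i, hi, hEx⟩ := mem_iUnion₂.1 hEx
  obtain ⟨j, hj, hMout⟩ := mem_iUnion₂.1 hMout
  rcases le_or_gt i j with hij | hji
  · exact not_mem_Mout_of_mem_Ex hInterval hij hEx hMout
  · obtain ⟨q, hq⟩ := mem_iUnion.1 hMout.2.1
    have hqp : q ≠ p := fun h => hMout.2.2 (h ▸ hq)
    obtain ⟨k, hk, r, hMout'⟩ :=
      exists_mem_Mout_of_mem_of_mem hPart hInterval hji hqp hq hEx.1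
    have hjk := (hNoDouble j hj k ⟨hj.1.trans (j.le_succ.trans hk.1), hk.2.trans hi.2⟩
      p r μ hMout hMout').1
    exact absurd hk.1 (by omega)
end

section
/- For any round, i.e., any range of steps s0 ≤ i < s1, and any processor p, with no further hypotheses, R s0 p ∪ (⋃_{s0 ≤ i < s1} E i p) ∪ (⋃_{s0 ≤ i < s1} M⁻ i p) ⊇ (⋃_{s0 ≤ i < s1} C i p) ∪ (⋃_{s0 ≤ i < s1} M⁺ i p). -/
open Set

variable {P V : Type*}

/- A node at `p` was either at `p` one step earlier, or was ready nowhere (it was enabled by `p`),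
or was ready elsewhere (it migrated to `p`). Iterating this from `s0` gives the theorem, since
executed and migrated-out nodes are in particular ready at `p`. -/

section Schedule

variable (R : ℕ → P → Set V) (p : P)

theorem Ex_subset (i : ℕ) : Ex R i p ⊆ R i p := sdiff_subset

theorem Mout_subset (i : ℕ) : Mout R i p ⊆ R i p := inter_subset_left

theorem R_succ_subset_union_En_union_Mi (i : ℕ) : R (i + 1) p ⊆ R i p ∪ En R i p ∪ Mi R i p := by
  intro x hx
  by_cases hready : x ∈ Rtot R i
  · by_cases hstay : x ∈ R i p
    · exact .inl (.inl hstay)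
    · exact .inr ⟨hx, hready, hstay⟩
  · exact .inl (.inr ⟨hx, hready⟩)

def arrivedAt (s0 i : ℕ) : Set V :=
  R s0 p ∪ (⋃ j ∈ Ico s0 i, En R j p) ∪ (⋃ j ∈ Ico s0 i, Mi R j p)

theorem arrivedAt_mono (s0 : ℕ) : Monotone (arrivedAt R p s0) := fun _ _ h =>
  have hIco : Ico s0 _ ⊆ Ico s0 _ := Ico_subset_Ico_right h
  union_subset_union (union_subset_union_right _ (biUnion_subset_biUnion_left hIco))
    (biUnion_subset_biUnion_left hIco)

theorem R_subset_arrivedAt {s0 i : ℕ} (h : s0 ≤ i) : R i p ⊆ arrivedAt R p s0 i := by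
  induction i, h using Nat.le_induction with
  | base => exact subset_union_left.trans subset_union_left
  | succ i hi ih =>
    have hmem : i ∈ Ico s0 (i + 1) := ⟨hi, i.lt_succ_self⟩
    refine (R_succ_subset_union_En_union_Mi R p i).trans (union_subset (union_subset ?_ ?_) ?_)
    · exact ih.trans (arrivedAt_mono R p s0 i.le_succ)
    · exact (subset_biUnion_of_mem (u := (En R · p)) hmem).trans
        (subset_union_right.trans subset_union_left)
    · exact (subset_biUnion_of_mem (u := (Mi R · p)) hmem).trans subset_union_right

end Schedule

theorem executed_and_migrated_out_subset (R : ℕ → P → Set V) (s0 s1 : ℕ) (p : P) :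
    (⋃ i ∈ Set.Ico s0 s1, Ex R i p) ∪ (⋃ i ∈ Set.Ico s0 s1, Mout R i p) ⊆
      R s0 p ∪ (⋃ i ∈ Set.Ico s0 s1, En R i p) ∪ (⋃ i ∈ Set.Ico s0 s1, Mi R i p) := by
  have ready_subset (i : ℕ) (hi : i ∈ Ico s0 s1) : R i p ⊆ arrivedAt R p s0 s1 :=
    (R_subset_arrivedAt R p hi.1).trans (arrivedAt_mono R p s0 hi.2.le)
  exact union_subset (iUnion₂_subset fun i hi => (Ex_subset R p i).trans (ready_subset i hi))
    (iUnion₂_subset fun i hi => (Mout_subset R p i).trans (ready_subset i hi))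
end

section
/- (Connecting Lemma, combinatorial form) Let V be a type and R, E, M⁻, C, M⁺, R', C' finite subsets of V satisfying: E ∩ R = ∅; (R ∪ E) ∩ M⁻ = ∅; C ∩ M⁺ = ∅; C ∪ M⁺ ⊆ R ∪ E ∪ M⁻; C ⊆ R; R' = (E ∪ R ∪ M⁻) \ (C ∪ M⁺); and C' ⊆ R'. Then |E| < |C'| + |M⁺| if and only if |R' \ C'| < |R \ C| + |M⁻|, where |·| denotes cardinality. -/
/-!
Counting the nodes without truncated subtraction, `|R'| + |C| + |M⁺| = |R| + |E| + |M⁻|`, since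
`R'` is what remains of the disjoint union `R ⊔ E ⊔ M⁻` after removing the disjoint union
`C ⊔ M⁺`. Together with `|R' \ C'| + |C'| = |R'|` and `|R \ C| + |C| = |R|`, both inequalities
become `|E| < |C'| + |M⁺|` after cancelling `|R| + |M⁻| - |C|`.
-/

namespace Finset

variable {V : Type*} [DecidableEq V]

theorem card_sdiff_union_add_card_add_card {R E Mminus C Mplus : Finset V}
    (hER : Disjoint E R) (hREM : Disjoint (R ∪ E) Mminus) (hCM : Disjoint C Mplus)
    (hsub : C ∪ Mplus ⊆ R ∪ E ∪ Mminus) :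
    ((E ∪ R ∪ Mminus) \ (C ∪ Mplus)).card + C.card + Mplus.card
      = R.card + E.card + Mminus.card := by
  rw [union_comm E R, add_assoc, ← card_union_of_disjoint hCM,
    card_sdiff_add_card_eq_card hsub, card_union_of_disjoint hREM,
    card_union_of_disjoint hER.symm]

end Finset

/-- Connecting Lemma (combinatorial form). -/
theorem connecting_lemma {V : Type*} [DecidableEq V]
    (R E Mminus C Mplus R' C' : Finset V)
    (h1 : E ∩ R = ∅)
    (h2 : (R ∪ E) ∩ Mminus = ∅)
    (h3 : C ∩ Mplus = ∅)
    (h4 : C ∪ Mplus ⊆ R ∪ E ∪ Mminus)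
    (h5 : C ⊆ R)
    (h6 : R' = (E ∪ R ∪ Mminus) \ (C ∪ Mplus))
    (h7 : C' ⊆ R') :
    E.card < C'.card + Mplus.card ↔ (R' \ C').card < (R \ C).card + Mminus.card := by
  have hR' : R'.card + C.card + Mplus.card = R.card + E.card + Mminus.card := by
    rw [h6]
    exact Finset.card_sdiff_union_add_card_add_card (Finset.disjoint_iff_inter_eq_empty.mpr h1)
      (Finset.disjoint_iff_inter_eq_empty.mpr h2) (Finset.disjoint_iff_inter_eq_empty.mpr h3) h4
  have hC' : (R' \ C').card + C'.card = R'.card := Finset.card_sdiff_add_card_eq_card h7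
  have hC : (R \ C).card + C.card = R.card := Finset.card_sdiff_add_card_eq_card h5
  omega
end

section
/- Let (Ω, μ) be a probability space, N a natural number, c a nonnegative real, M : Ω → ℕ a random variable with M ω ≤ N for all ω, and Y₁, …, Y_N : Ω → {0, 1} indicator random variables such that each Yᵢ is independent of M and satisfies E[Yᵢ] ≥ c. Then E[ ∑_{i=1}^{N − M} Yᵢ ] ≥ c · (N − E[M]). -/
/-! Write `K = N - M`. Then `∑_{i < K} Y i = ∑_{i < N} 1{i < K} Y i`, and since the event
`{i < K}` is determined by `M`, independence gives `E[1{i < K} Y i] = P(i < K) E[Y i]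
≥ c P(i < K)`. Summing, the tail-sum formula `∑_{i < N} P(i < K) = E[K] = N - E[M]`
finishes the proof. -/

open MeasureTheory ProbabilityTheory Finset

section

variable {Ω E : Type*} [MeasurableSpace Ω] {μ : Measure Ω}
  [NormedAddCommGroup E] [NormedSpace ℝ E]

lemma sum_range_eq_sum_range_ite {M : Type*} [AddCommMonoid M] (f : ℕ → M) {k N : ℕ}
    (hkN : k ≤ N) : ∑ i ∈ range k, f i = ∑ i ∈ range N, if i < k then f i else 0 := by
  rw [← sum_filter]
  congr 1
  ext i
  simp only [mem_range, mem_filter]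
  omega

lemma integral_sum_range_eq_sum_setIntegral {K : Ω → ℕ} {N : ℕ} (hK : Measurable K)
    (hKN : ∀ ω, K ω ≤ N) {f : ℕ → Ω → E} (hf : ∀ i < N, Integrable (f i) μ) :
    ∫ ω, ∑ i ∈ range (K ω), f i ω ∂μ =
      ∑ i ∈ range N, ∫ ω in {ω | i < K ω}, f i ω ∂μ := by
  have hmeas (i : ℕ) : MeasurableSet {ω | i < K ω} := hK measurableSet_Ioi
  have hpt (ω : Ω) : ∑ i ∈ range (K ω), f i ω =
      ∑ i ∈ range N, {ω | i < K ω}.indicator (f i) ω := by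
    simp only [sum_range_eq_sum_range_ite _ (hKN ω), Set.indicator_apply, Set.mem_ofPred_eq]
  simp_rw [hpt, ← integral_indicator (hmeas _)]
  exact integral_finsetSum _ fun i hi => (hf i (mem_range.1 hi)).indicator (hmeas i)

lemma integral_natCast_eq_sum_measureReal [IsFiniteMeasure μ] {K : Ω → ℕ} {N : ℕ}
    (hK : Measurable K) (hKN : ∀ ω, K ω ≤ N) :
    ∫ ω, (K ω : ℝ) ∂μ = ∑ i ∈ range N, μ.real {ω | i < K ω} := by
  simpa using integral_sum_range_eq_sum_setIntegral (μ := μ) (f := fun _ _ => (1 : ℝ)) hK hKN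
    fun _ _ => integrable_const 1

lemma ProbabilityTheory.IndepFun.setIntegral_preimage_eq_mul {β : Type*} [MeasurableSpace β]
    {X : Ω → ℝ} {Z : Ω → β} (hXZ : IndepFun X Z μ) (hX : AEMeasurable X μ)
    (hZ : Measurable Z) {S : Set β} (hS : MeasurableSet S) :
    ∫ ω in Z ⁻¹' S, X ω ∂μ = μ.real (Z ⁻¹' S) * ∫ ω, X ω ∂μ :=
  Indep.setIntegral_eq_mul (f := id) hZ.comap_le hXZ.symm hX ⟨S, hS, rfl⟩
    aestronglyMeasurable_id

end

theorem expected_sum_lower_bound_general {Ω : Type*} [MeasurableSpace Ω] (μ : Measure Ω)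
    [IsProbabilityMeasure μ]
    (N : ℕ) (c : ℝ)
    (M : Ω → ℕ) (hM : Measurable M) (hMN : ∀ ω, M ω ≤ N)
    (Y : ℕ → Ω → ℝ)
    (hYmeas : ∀ i < N, Measurable (Y i))
    (hY01 : ∀ i < N, ∀ ω, Y i ω = 0 ∨ Y i ω = 1)
    (hindep : ∀ i < N, IndepFun (Y i) M μ)
    (hEY : ∀ i < N, c ≤ ∫ ω, Y i ω ∂μ) :
    c * ((N : ℝ) - ∫ ω, (M ω : ℝ) ∂μ) ≤
      ∫ ω, (∑ i ∈ Finset.range (N - M ω), Y i ω) ∂μ := by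
  have hK : Measurable fun ω => N - M ω := measurable_from_nat.comp hM
  have hKN (ω : Ω) : N - M ω ≤ N := Nat.sub_le _ _
  have hMint : Integrable (fun ω => (M ω : ℝ)) μ :=
    .of_bound (measurable_from_nat.comp hM).aestronglyMeasurable N
      (.of_forall fun ω => by simpa using hMN ω)
  have hYint (i : ℕ) (hi : i < N) : Integrable (Y i) μ :=
    .of_bound (hYmeas i hi).aestronglyMeasurable 1
      (.of_forall fun ω => by rcases hY01 i hi ω with h | h <;> simp [h])
  have hEK : (N : ℝ) - ∫ ω, (M ω : ℝ) ∂μ = ∫ ω, ((N - M ω : ℕ) : ℝ) ∂μ := by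
    simp_rw [Nat.cast_sub (hMN _)]
    rw [integral_sub (integrable_const _) hMint, integral_const, probReal_univ, one_smul]
  calc c * ((N : ℝ) - ∫ ω, (M ω : ℝ) ∂μ)
      = ∑ i ∈ range N, μ.real {ω | i < N - M ω} * c := by
        rw [hEK, integral_natCast_eq_sum_measureReal hK hKN, mul_sum]
        simp_rw [mul_comm c]
    _ ≤ ∑ i ∈ range N, μ.real {ω | i < N - M ω} * ∫ ω, Y i ω ∂μ :=
        sum_le_sum fun i hi =>
          mul_le_mul_of_nonneg_left (hEY i (mem_range.1 hi)) measureReal_nonneg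
    _ = ∑ i ∈ range N, ∫ ω in {ω | i < N - M ω}, Y i ω ∂μ := by
        refine sum_congr rfl fun i hi => ?_
        have hi : i < N := mem_range.1 hi
        exact ((hindep i hi).setIntegral_preimage_eq_mul (hYmeas i hi).aemeasurable hM
          (S := {m | i < N - m}) .of_discrete).symm
    _ = ∫ ω, (∑ i ∈ Finset.range (N - M ω), Y i ω) ∂μ :=
        (integral_sum_range_eq_sum_setIntegral hK hKN hYint).symm

theorem expected_sum_lower_bound {Ω : Type*} [MeasurableSpace Ω] (μ : Measure Ω)
    [IsProbabilityMeasure μ]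
    (N : ℕ) (c : ℝ) (hc : 0 ≤ c)
    (M : Ω → ℕ) (hM : Measurable M) (hMN : ∀ ω, M ω ≤ N)
    (Y : ℕ → Ω → ℝ)
    (hYmeas : ∀ i < N, Measurable (Y i))
    (hY01 : ∀ i < N, ∀ ω, Y i ω = 0 ∨ Y i ω = 1)
    (hindep : ∀ i < N, IndepFun (Y i) M μ)
    (hEY : ∀ i < N, c ≤ ∫ ω, Y i ω ∂μ) :
    c * ((N : ℝ) - ∫ ω, (M ω : ℝ) ∂μ) ≤
      ∫ ω, (∑ i ∈ Finset.range (N - M ω), Y i ω) ∂μ :=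
  expected_sum_lower_bound_general μ N c M hM hMN Y hYmeas hY01 hindep hEY
end

section
/- For every real number α with 0.7375 ≤ α < 1, it holds that 1 < 1 − exp(−α) + (α² / (1 − α)) · (1 − exp(−(1 − α))). -/
/-!
Put `t = 1 - α ∈ (0, 0.2625]`. Since `exp (-α) = exp t / e`, the claim is
`exp t < e · α² · (1 - exp (-t)) / t`. Bounding `exp t` from above and `exp (-t)` from above by
their degree-four Taylor polynomials (with a slightly enlarged last coefficient for `exp t`),
and `e` from below by `exp_one_gt_d9`, leaves a polynomial inequality in `t`. Its margin at
`t = 0.2625` is only about `10⁻⁴`, which is why four Taylor terms and nine digits of `e` are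
needed; written in `0.2625 - t` the polynomial has positive coefficients.
-/

open Real

namespace Real

theorem exp_le_quartic_of_nonneg_of_le_one {x : ℝ} (h0 : 0 ≤ x) (h1 : x ≤ 1) :
    exp x ≤ 1 + x + x ^ 2 / 2 + x ^ 3 / 6 + 5 / 96 * x ^ 4 := by
  have h := exp_bound' h0 h1 (n := 4) (by norm_num)
  norm_num [Finset.sum_range_succ, Nat.factorial] at h
  linarith

theorem exp_neg_le_quartic_of_nonneg {x : ℝ} (hx : 0 ≤ x) :
    exp (-x) ≤ 1 - x + x ^ 2 / 2 - x ^ 3 / 6 + x ^ 4 / 24 := by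
  have hTaylor : 1 + x + x ^ 2 / 2 + x ^ 3 / 6 + x ^ 4 / 24 ≤ exp x := by
    simpa [Finset.sum_range_succ, Nat.factorial] using sum_le_exp_of_nonneg hx 5
  have hQ : 0 ≤ 1 - x + x ^ 2 / 2 - x ^ 3 / 6 + x ^ 4 / 24 := by
    have hSOS : 1 - x + x ^ 2 / 2 - x ^ 3 / 6 + x ^ 4 / 24 =
        (1 - x / 2) ^ 2 + (x / 2 * (1 - x / 3)) ^ 2 + x ^ 4 / 72 := by ring
    rw [hSOS]
    positivity
  rw [exp_neg, inv_le_iff_one_le_mul₀ (exp_pos x)]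
  calc (1 : ℝ) ≤ 1 + x ^ 6 / 72 + x ^ 8 / 576 := by linarith [pow_nonneg hx 6, pow_nonneg hx 8]
    _ = (1 - x + x ^ 2 / 2 - x ^ 3 / 6 + x ^ 4 / 24) *
          (1 + x + x ^ 2 / 2 + x ^ 3 / 6 + x ^ 4 / 24) := by ring
    _ ≤ _ := by gcongr

end Real

theorem quartic_lt_d9_mul_sq_mul_cubic {t : ℝ} (ht : t ≤ 0.2625) :
    1 + t + t ^ 2 / 2 + t ^ 3 / 6 + 5 / 96 * t ^ 4 <
      2.7182818283 * (1 - t) ^ 2 * (1 - t / 2 + t ^ 2 / 6 - t ^ 3 / 24) := by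
  obtain ⟨s, hs, rfl⟩ : ∃ s, 0 ≤ s ∧ t = 0.2625 - s := ⟨0.2625 - t, by linarith, by ring⟩
  nlinarith [pow_nonneg hs 2, pow_nonneg hs 3, pow_nonneg hs 4, pow_nonneg hs 5]

theorem wss_inequality {α : ℝ} (h1 : 0.7375 ≤ α) (h2 : α < 1) :
    1 < 1 - Real.exp (-α) + α ^ 2 / (1 - α) * (1 - Real.exp (-(1 - α))) := by
  set t := 1 - α with ht_def
  have ht : 0 < t := by linarith
  have hR : 0 < 1 - t / 2 + t ^ 2 / 6 - t ^ 3 / 24 := by nlinarith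
  have hgain : t * (1 - t / 2 + t ^ 2 / 6 - t ^ 3 / 24) ≤ 1 - exp (-t) := by
    linarith [exp_neg_le_quartic_of_nonneg ht.le]
  suffices exp (-α) < α ^ 2 / t * (1 - exp (-t)) by linarith
  calc exp (-α) = exp t / exp 1 := by rw [← exp_sub, ht_def]; ring_nf
    _ ≤ (1 + t + t ^ 2 / 2 + t ^ 3 / 6 + 5 / 96 * t ^ 4) / exp 1 := by
      gcongr
      exact exp_le_quartic_of_nonneg_of_le_one ht.le (by linarith)
    _ < α ^ 2 * (1 - t / 2 + t ^ 2 / 6 - t ^ 3 / 24) := by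
      rw [div_lt_iff₀ (exp_pos 1), show α = 1 - t by ring]
      calc _ < 2.7182818283 * (1 - t) ^ 2 * (1 - t / 2 + t ^ 2 / 6 - t ^ 3 / 24) :=
            quartic_lt_d9_mul_sq_mul_cubic (by linarith)
        _ ≤ exp 1 * (1 - t) ^ 2 * (1 - t / 2 + t ^ 2 / 6 - t ^ 3 / 24) := by
            gcongr
            exact exp_one_gt_d9.le
        _ = _ := by ring
    _ ≤ α ^ 2 / t * (1 - exp (-t)) := by
      rw [div_mul_eq_mul_div, le_div_iff₀ ht, mul_assoc]
      gcongr
      linarith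
end

section
/- For every real number α with 0.7375 ≤ α < 1, it holds that (−2 + exp(α − 1) · (2 + α·(4 − 5α + α³))) / (α − 1)³ ≥ 0. -/
/-!
Write `x = 1 - α`. The denominator `(α - 1)³ = -x³` is negative, so it suffices that the numerator
is nonpositive. Since `2 (1 + x + x²/2) - (2 + α (4 - 5α + α³)) = x³ (α + 3) ≥ 0`, the numerator is
at most `2 (e^{-x} (1 + x + x²/2) - 1)`, which is nonpositive because `1 + x + x²/2 ≤ e^x` for `x ≥ 0`.
-/

open Real

lemma exp_neg_mul_quadratic_le_one {x : ℝ} (hx : 0 ≤ x) : exp (-x) * (1 + x + x ^ 2 / 2) ≤ 1 := by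
  calc exp (-x) * (1 + x + x ^ 2 / 2) ≤ exp (-x) * exp x :=
        mul_le_mul_of_nonneg_left (quadratic_le_exp_of_nonneg hx) (exp_pos _).le
    _ = 1 := by rw [← exp_add, neg_add_cancel, exp_zero]

lemma quartic_le_two_mul_quadratic {α : ℝ} (h1 : -3 ≤ α) (h2 : α ≤ 1) :
    2 + α * (4 - 5 * α + α ^ 3) ≤ 2 * (1 + (1 - α) + (1 - α) ^ 2 / 2) := by
  have key : 2 * (1 + (1 - α) + (1 - α) ^ 2 / 2) - (2 + α * (4 - 5 * α + α ^ 3))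
      = (1 - α) ^ 3 * (α + 3) := by ring
  have : 0 ≤ (1 - α) ^ 3 * (α + 3) :=
    mul_nonneg (pow_nonneg (by linarith) 3) (by linarith)
  linarith

lemma v_numerator_nonpos {α : ℝ} (h1 : -3 ≤ α) (h2 : α ≤ 1) :
    -2 + exp (α - 1) * (2 + α * (4 - 5 * α + α ^ 3)) ≤ 0 := by
  have hexp := exp_neg_mul_quadratic_le_one (x := 1 - α) (by linarith)
  rw [neg_sub] at hexp
  have := mul_le_mul_of_nonneg_left (quartic_le_two_mul_quadratic h1 h2) (exp_pos (α - 1)).le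
  linarith

theorem v_nonneg {α : ℝ} (h1 : 0.7375 ≤ α) (h2 : α < 1) :
    0 ≤ (-2 + Real.exp (α - 1) * (2 + α * (4 - 5 * α + α ^ 3))) / (α - 1) ^ 3 := by
  have hnum := v_numerator_nonpos (by linarith) h2.le
  have hden : (α - 1) ^ 3 ≤ 0 := Odd.pow_nonpos (by decide) (by linarith)
  exact div_nonneg_of_nonpos hnum hden
end
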